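/- Let D be a defeasible theory, let ⟨T_{D,WF}, F_{D,WF}⟩ be its well-founded model under NDL, and let λ be the closure ordinal of the sequence X_D↑0, X_D↑1, … (the least λ with X_D↑λ = X_D↑(λ+1)). Then ⟨T_{D,WF}, F_{D,WF}⟩ = ⟨X_D↑λ, Lit(D) − β_D(X_D↑λ)⟩. -/

import Mathlib

namespace DLWFS

universe u

/-- Ground literals over a type `A` of atoms: atoms and their classical complements. -/
inductive Lit (A : Type u) : Type u where
  | pos : A → Lit A
  | neg : A → Lit A

/-- The classical complement `p̄` of a literal `p`. -/
def Lit.compl {A : Type u} : Lit A → Lit A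
  | .pos a => .neg a
  | .neg a => .pos a

/-- The three kinds of rules of a defeasible theory. -/
inductive RuleKind : Type where
  | strict
  | defeasible
  | defeater
deriving DecidableEq

/-- A rule of a defeasible theory: a kind, a body (a set of literals) and a head literal. -/
structure DRule (A : Type u) where
  kind : RuleKind
  body : Set (Lit A)
  head : Lit A

/-- A defeasible theory `D = ⟨R, C, ≺⟩`. -/
structure DTheory (A : Type u) where
  rules : Set (DRule A)
  conflicts : Set (Set (Lit A))
  prec : DRule A → DRule A → Prop

namespace DTheory

variable {A : Type u}

/-- The strict rules `R_s`. -/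
def Rs (D : DTheory A) : Set (DRule A) := {r ∈ D.rules | r.kind = RuleKind.strict}

/-- The defeasible rules `R_d`. -/
def Rd (D : DTheory A) : Set (DRule A) := {r ∈ D.rules | r.kind = RuleKind.defeasible}

/-- The defeater rules `R_u`. -/
def Ru (D : DTheory A) : Set (DRule A) := {r ∈ D.rules | r.kind = RuleKind.defeater}

/-- `C[p]`: the conflict sets containing literal `p`. -/
def Cset (D : DTheory A) (p : Lit A) : Set (Set (Lit A)) := {c ∈ D.conflicts | p ∈ c}

/-- Structural conditions in the definition of a defeasible theory: a countable set of
rules with finite bodies, a countable set of finite conflict sets containing every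
minimal conflict set `{p, ¬p}`, and an acyclic priority relation over non-strict rules. -/
def WellFormed (D : DTheory A) : Prop :=
  D.rules.Countable ∧ D.conflicts.Countable ∧
  (∀ r ∈ D.rules, r.body.Finite) ∧
  (∀ c ∈ D.conflicts, c.Finite) ∧
  (∀ p : A, ({Lit.pos p, Lit.neg p} : Set (Lit A)) ∈ D.conflicts) ∧
  (∀ r s, D.prec r s → r.kind ≠ RuleKind.strict ∧ s.kind ≠ RuleKind.strict) ∧
  (∀ r, ¬ Relation.TransGen D.prec r r)

/-- `C = C_MIN`: the conflict sets are exactly the minimal ones `{p, ¬p}`. -/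
def MinimalConflicts (D : DTheory A) : Prop :=
  D.conflicts = {c | ∃ p : A, c = ({Lit.pos p, Lit.neg p} : Set (Lit A))}

end DTheory

/-- A 3-valued interpretation: a pair `⟨T, F⟩` of sets. -/
abbrev Interp (L : Type u) : Type u := Set L × Set L

variable {A : Type u}

/-- `S` is ADL-unfounded with respect to theory `D` and interpretation `I = ⟨T, F⟩`. -/
def ADLUnfounded (D : DTheory A) (I : Interp (Lit A)) (S : Set (Lit A)) : Prop :=
  ∀ p ∈ S,
    (∀ r ∈ D.Rs, r.head = p → (r.body ∩ (I.2 ∪ S)).Nonempty) ∧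
    (∀ r ∈ D.Rd, r.head = p →
      (r.body ∩ (I.2 ∪ S)).Nonempty ∨
      ∃ c ∈ D.conflicts, p ∈ c ∧
        ∀ q ∈ c \ {p}, ∃ s ∈ D.rules, s.head = q ∧ s.body ⊆ I.1 ∧
          (D.prec r s ∨ s.kind = RuleKind.strict))

/-- `S` is NDL-unfounded with respect to theory `D` and interpretation `I = ⟨T, F⟩`. -/
def NDLUnfounded (D : DTheory A) (I : Interp (Lit A)) (S : Set (Lit A)) : Prop :=
  ∀ p ∈ S,
    (∀ r ∈ D.Rs, r.head = p → (r.body ∩ (I.2 ∪ S)).Nonempty) ∧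
    (∀ r ∈ D.Rd, r.head = p →
      (r.body ∩ (I.2 ∪ S)).Nonempty ∨
      ∃ c ∈ D.conflicts, p ∈ c ∧
        ∀ q ∈ c \ {p}, ∃ s ∈ D.rules, s.head = q ∧ s.body ⊆ I.1 ∧
          ¬ D.prec s r)

/-- `U_D(I)` for ADL: the union of all ADL-unfounded sets. -/
def UA (D : DTheory A) (I : Interp (Lit A)) : Set (Lit A) :=
  ⋃₀ {S | ADLUnfounded D I S}

/-- `U_D(I)` for NDL: the union of all NDL-unfounded sets. -/
def UN (D : DTheory A) (I : Interp (Lit A)) : Set (Lit A) :=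
  ⋃₀ {S | NDLUnfounded D I S}

/-- `T_D(I)`: the literals having a witness of provability with respect to `I = ⟨T, F⟩`. -/
def TD (D : DTheory A) (I : Interp (Lit A)) : Set (Lit A) :=
  {p | ∃ r ∈ D.rules, r.head = p ∧ r.body ⊆ I.1 ∧
    (r.kind = RuleKind.strict ∨
      (r.kind = RuleKind.defeasible ∧
        ∀ c ∈ D.conflicts, p ∈ c →
          ∃ q ∈ c \ {p}, ∀ s ∈ D.rules, s.head = q →
            (D.prec s r ∨ (s.body ∩ I.2).Nonempty)))}

/-- `W_D` for ADL. -/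
def WA (D : DTheory A) (I : Interp (Lit A)) : Interp (Lit A) := (TD D I, UA D I)

/-- `W_D` for NDL. -/
def WN (D : DTheory A) (I : Interp (Lit A)) : Interp (Lit A) := (TD D I, UN D I)

/-- `I` is the well-founded model for the operator `W`: the least fixpoint of `W`
(componentwise order). -/
def IsWFModel {L : Type u} (W : Interp L → Interp L) (I : Interp L) : Prop :=
  W I = I ∧ ∀ J, W J = J → I.1 ⊆ J.1 ∧ I.2 ⊆ J.2

/-- A rule of a normal logic program: `head ← pos, ∼neg`. -/
structure NRule (A : Type u) where
  head : A
  pos : Set A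
  neg : Set A

/-- A normal logic program: a set of rules. -/
abbrev NProgram (A : Type u) : Type u := Set (NRule A)

/-- Structural conditions in the definition of a normal logic program: a countable
set of ground rules with finite bodies. -/
def NProgram.WellFormed (P : NProgram A) : Prop :=
  P.Countable ∧ ∀ r ∈ P, r.pos.Finite ∧ r.neg.Finite

/-- The immediate consequence operator `T_Π` on 3-valued interpretations. -/
def TP (P : NProgram A) (I : Interp A) : Set A :=
  {a | ∃ r ∈ P, r.head = a ∧ r.pos ⊆ I.1 ∧ r.neg ⊆ I.2}

/-- `S` is an unfounded set of program `P` with respect to interpretation `I = ⟨T, F⟩`. -/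
def PUnfounded (P : NProgram A) (I : Interp A) (S : Set A) : Prop :=
  ∀ p ∈ S, ∀ r ∈ P, r.head = p →
    (r.pos ∩ (I.2 ∪ S)).Nonempty ∨ (r.neg ∩ I.1).Nonempty

/-- `U_Π(I)`: the greatest unfounded set (union of all unfounded sets). -/
def UP (P : NProgram A) (I : Interp A) : Set A :=
  ⋃₀ {S | PUnfounded P I S}

/-- `W_Π(I) = ⟨T_Π(I), U_Π(I)⟩`. -/
def WP (P : NProgram A) (I : Interp A) : Interp A := (TP P I, UP P I)

/-- Transfinite iteration of an operator `W` from `⊥`, taking suprema at limit ordinals. -/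
noncomputable def iterW {α : Type*} [CompleteLattice α] (W : α → α) : Ordinal.{0} → α :=
  fun o =>
    Ordinal.limitRecOn (motive := fun _ => α) o ⊥ (fun _ ih => W ih)
      (fun o' _ ih => ⨆ x : Set.Iio o', ih x.1 x.2)

/-- One step of the immediate consequence operator for a set of defeasible-theory rules. -/
def TRstep (R : Set (DRule A)) (S : Set (Lit A)) : Set (Lit A) :=
  {p | ∃ r ∈ R, r.head = p ∧ r.body ⊆ S}

/-- The finite iterates `T_R ↑ n`. -/
def TRiter (R : Set (DRule A)) : ℕ → Set (Lit A)
  | 0 => ∅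
  | n + 1 => TRstep R (TRiter R n)

/-- `Cl(R) = T_R ↑ ω`. -/
def ClR (R : Set (DRule A)) : Set (Lit A) := ⋃ n, TRiter R n

/-- The `α`-reduct `D_α^S` of a defeasible theory. -/
def alphaReduct (D : DTheory A) (S : Set (Lit A)) : Set (DRule A) :=
  D.Rs ∪ {r ∈ D.Rd | ∀ c ∈ D.conflicts, r.head ∈ c → ∃ q ∈ c \ {r.head}, q ∉ S}

/-- The ambiguity-propagating operator `α_D(S) = Cl(D_α^S)`. -/
def alphaOp (D : DTheory A) (S : Set (Lit A)) : Set (Lit A) := ClR (alphaReduct D S)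

/-- The `β`-reduct `D_β^S` of a defeasible theory. -/
def betaReduct (D : DTheory A) (S : Set (Lit A)) : Set (DRule A) :=
  D.Rs ∪ {r ∈ D.Rd | ∀ c ∈ D.conflicts, r.head ∈ c →
    ∃ q ∈ c \ {r.head}, ∀ s ∈ D.rules, s.head = q → (¬ s.body ⊆ S ∨ D.prec s r)}

/-- The ambiguity-blocking operator `β_D(S) = Cl(D_β^S)`. -/
def betaOp (D : DTheory A) (S : Set (Lit A)) : Set (Lit A) := ClR (betaReduct D S)

/-- `S` is an `α`-stable set of `D`. -/
def AlphaStable (D : DTheory A) (S : Set (Lit A)) : Prop := alphaOp D S = S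

/-- `S` is a `β`-stable set of `D`. -/
def BetaStable (D : DTheory A) (S : Set (Lit A)) : Prop := betaOp D S = S

/-- The sequence `X_D↑λ`: `X↑0 = ∅`, `X↑(λ+1) = β_D(β_D(X↑λ))`, unions at limits. -/
noncomputable def Xseq (D : DTheory A) : Ordinal.{0} → Set (Lit A) :=
  iterW (fun S => betaOp D (betaOp D S))

/-- The Gelfond–Lifschitz reduct `Π^S`. -/
def glReduct (P : NProgram A) (S : Set A) : NProgram A :=
  {r' | ∃ r ∈ P, r.neg ∩ S = ∅ ∧ r' = NRule.mk r.head r.pos ∅}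

/-- One step of the immediate consequence operator for a NAF-free program. -/
def TPstep (P : NProgram A) (S : Set A) : Set A :=
  {a | ∃ r ∈ P, r.head = a ∧ r.pos ⊆ S}

/-- The finite iterates `T_Π ↑ n` of a NAF-free program. -/
def TPiter (P : NProgram A) : ℕ → Set A
  | 0 => ∅
  | n + 1 => TPstep P (TPiter P n)

/-- `Cl(Π) = T_Π ↑ ω`. -/
def ClP (P : NProgram A) : Set A := ⋃ n, TPiter P n

/-- The Gelfond–Lifschitz operator `γ_Π(S) = Cl(Π^S)`. -/
def gamma (P : NProgram A) (S : Set A) : Set A := ClP (glReduct P S)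

/-- `S` is a stable model of `P`. -/
def StableModel (P : NProgram A) (S : Set A) : Prop := gamma P S = S

/-- `Prod(C[p])`: all sets obtained by choosing one literal other than `p` from each
conflict set containing `p`. -/
def ProdC (D : DTheory A) (p : Lit A) : Set (Set (Lit A)) :=
  {Q | ∃ f : Set (Lit A) → Lit A,
    (∀ c ∈ D.conflicts, p ∈ c → f c ∈ c \ {p}) ∧
    Q = f '' {c ∈ D.conflicts | p ∈ c}}

/-- The logic program translation `Π_D` of a defeasible theory `D` (negative literals
are treated as fresh atoms, so the atoms of the program are the literals of `D`). -/
def lpTrans (D : DTheory A) : NProgram (Lit A) :=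
  {r' | ∃ r ∈ D.Rs, r' = NRule.mk r.head r.body ∅} ∪
  {r' | ∃ r ∈ D.Rd, ∃ Q ∈ ProdC D r.head, r' = NRule.mk r.head r.body Q}

/-- The explicit version `Φ` of a normal program `Π`: atoms of `Φ` are the literals
over the atoms of `Π` (`¬p` being a fresh atom). -/
def explicitVer (P : NProgram A) : NProgram (Lit A) :=
  {r' | ∃ r ∈ P, r' = NRule.mk (Lit.pos r.head) (Lit.pos '' r.pos ∪ Lit.neg '' r.neg) ∅} ∪
  {r' | ∃ p : A, r' = NRule.mk (Lit.neg p) ∅ {Lit.pos p}}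

/-- The minimal conflict sets over atom type `A`. -/
def CMin (A : Type u) : Set (Set (Lit A)) :=
  {c | ∃ p : A, c = ({Lit.pos p, Lit.neg p} : Set (Lit A))}

/-- The defeasible theory translation `D_Π` of a normal program `Π`: each program rule
becomes a strict rule (default literals `∼b` becoming negative literals `¬b`), and each
atom `p` yields a presumption `∅ ⇒ ¬p`; conflict sets are minimal and `≺` is empty. -/
def dtTrans (P : NProgram A) : DTheory A :=
  { rules :=
      {e | ∃ r ∈ P, e = DRule.mk RuleKind.strict
            (Lit.pos '' r.pos ∪ Lit.neg '' r.neg) (Lit.pos r.head)} ∪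
      {e | ∃ p : A, e = DRule.mk RuleKind.defeasible ∅ (Lit.neg p)}
    conflicts := CMin A
    prec := fun _ _ => False }

/-- `M^¬ = M ∪ {¬p : p ∉ M}`, atoms being identified with positive literals. -/
def negCompl (M : Set A) : Set (Lit A) :=
  Lit.pos '' M ∪ Lit.neg '' {p | p ∉ M}

end DLWFS

namespace DLWFS

/-!
`T_D(⟨T, F⟩)` is one step of the consequence operator of the β-reduct `D_β^{Fᶜ}`, and for every
interpretation `⟨T, F⟩` the complement of `β_D(T)` is NDL-unfounded. Hence a fixpoint `⟨T, F⟩`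
of `W_D` has `β_D(T)ᶜ ⊆ F`, so `Fᶜ ⊆ β_D(S)` whenever `S ⊆ T`, and `T` is closed under
`D_β^{Fᶜ} ⊇ D_β^{β_D(S)}`; thus `β_D ∘ β_D` maps subsets of `T` into `T` and all of `X_D↑` stays
below `T`. Conversely, when `X = β_D(β_D(X))` the interpretation `⟨X, β_D(X)ᶜ⟩` is a fixpoint:
its `T_D` is one more step of `Cl(D_β^{β_D(X)})`, which is `X` again, and an induction along
`T_{D_β^X}↑n` shows that no literal of `β_D(X)` lies in an unfounded set. Comparing the two
fixpoints by leastness gives the theorem.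
-/

section Closure

variable {A : Type*}

lemma TRstep_mono {R R' : Set (DRule A)} {S S' : Set (Lit A)} (hR : R ⊆ R') (hS : S ⊆ S') :
    TRstep R S ⊆ TRstep R' S' := by
  rintro p ⟨r, hr, rfl, hb⟩
  exact ⟨r, hR hr, rfl, hb.trans hS⟩

lemma TRiter_mono {R R' : Set (DRule A)} (hR : R ⊆ R') (n : ℕ) : TRiter R n ⊆ TRiter R' n := by
  induction n with
  | zero => exact subset_rfl
  | succ n ih => exact TRstep_mono hR ih

lemma TRiter_monotone (R : Set (DRule A)) : Monotone (TRiter R) := by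
  refine monotone_nat_of_le_succ fun n => ?_
  induction n with
  | zero => exact Set.empty_subset _
  | succ n ih => exact TRstep_mono subset_rfl ih

lemma TRiter_subset_ClR (R : Set (DRule A)) (n : ℕ) : TRiter R n ⊆ ClR R :=
  Set.subset_iUnion (TRiter R) n

lemma ClR_mono {R R' : Set (DRule A)} (hR : R ⊆ R') : ClR R ⊆ ClR R' :=
  Set.iUnion_mono (TRiter_mono hR)

lemma ClR_subset_of_TRstep_subset {R : Set (DRule A)} {S : Set (Lit A)}
    (h : TRstep R S ⊆ S) : ClR R ⊆ S := by
  refine Set.iUnion_subset fun n => ?_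
  induction n with
  | zero => exact Set.empty_subset _
  | succ n ih => exact (TRstep_mono subset_rfl ih).trans h

lemma TRstep_ClR {R : Set (DRule A)} (hfin : ∀ r ∈ R, r.body.Finite) :
    TRstep R (ClR R) = ClR R := by
  refine subset_antisymm ?_ ?_
  · rintro p ⟨r, hr, rfl, hb⟩
    obtain ⟨n, hn⟩ := (TRiter_monotone R).directed_le.exists_mem_subset_of_finset_subset_biUnion
      (s := (hfin r hr).toFinset) (by simpa [ClR] using hb)
    exact TRiter_subset_ClR R (n + 1) ⟨r, hr, rfl, by simpa using hn⟩
  · intro p hp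
    obtain ⟨n, hn⟩ := Set.mem_iUnion.1 hp
    cases n with
    | zero => exact absurd hn (Set.notMem_empty p)
    | succ n => exact TRstep_mono subset_rfl (TRiter_subset_ClR R n) hn

end Closure

section Iteration

variable {α : Type*} [CompleteLattice α]

lemma iterW_zero (W : α → α) : iterW W 0 = ⊥ :=
  Ordinal.limitRecOn_zero ..

lemma iterW_add_one (W : α → α) (o : Ordinal) : iterW W (o + 1) = W (iterW W o) :=
  Ordinal.limitRecOn_add_one ..

lemma iterW_of_isSuccLimit (W : α → α) {o : Ordinal} (ho : Order.IsSuccLimit o) :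
    iterW W o = ⨆ x : Set.Iio o, iterW W x.1 :=
  Ordinal.limitRecOn_limit _ _ _ _ ho

lemma iterW_le {W : α → α} {x : α} (h : ∀ y ≤ x, W y ≤ x) (o : Ordinal) : iterW W o ≤ x := by
  induction o using Ordinal.limitRecOn with
  | zero => exact (iterW_zero W).trans_le bot_le
  | add_one o ih => exact (iterW_add_one W o).trans_le (h _ ih)
  | limit o ho ih => exact (iterW_of_isSuccLimit W ho).trans_le (iSup_le fun x => ih x.1 x.2)

end Iteration

section Beta

variable {A : Type*} (D : DTheory A)

lemma betaReduct_subset_rules (S : Set (Lit A)) : betaReduct D S ⊆ D.rules := by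
  rintro r (⟨hr, -⟩ | ⟨⟨hr, -⟩, -⟩) <;> exact hr

lemma betaReduct_antitone : Antitone (betaReduct D) := by
  rintro S S' hS r (hr | ⟨hr, hc⟩)
  · exact Or.inl hr
  · refine Or.inr ⟨hr, fun c hc' hrc => ?_⟩
    obtain ⟨q, hq, hall⟩ := hc c hc' hrc
    exact ⟨q, hq, fun s hs hsq => (hall s hs hsq).imp (mt fun h => h.trans hS) id⟩

lemma betaOp_antitone : Antitone (betaOp D) :=
  fun _ _ hS => ClR_mono (betaReduct_antitone D hS)

lemma TD_eq_TRstep_betaReduct (I : Interp (Lit A)) :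
    TD D I = TRstep (betaReduct D I.2ᶜ) I.1 := by
  have hblock : ∀ s : DRule A, (s.body ∩ I.2).Nonempty ↔ ¬ s.body ⊆ I.2ᶜ := fun s => by
    rw [Set.subset_compl_iff_disjoint_right, Set.not_disjoint_iff_nonempty_inter]
  ext p
  simp only [TD, TRstep, betaReduct, DTheory.Rs, DTheory.Rd, Set.mem_ofPred_eq, Set.mem_union,
    hblock]
  constructor
  · rintro ⟨r, hr, rfl, hb, hs | ⟨hd, hc⟩⟩
    · exact ⟨r, Or.inl ⟨hr, hs⟩, rfl, hb⟩
    · exact ⟨r, Or.inr ⟨⟨hr, hd⟩, fun c hc' hrc =>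
        (hc c hc' hrc).imp fun q => And.imp_right fun h s hs hsq => (h s hs hsq).symm⟩, rfl, hb⟩
  · rintro ⟨r, ⟨hr, hs⟩ | ⟨⟨hr, hd⟩, hc⟩, rfl, hb⟩
    · exact ⟨r, hr, rfl, hb, Or.inl hs⟩
    · exact ⟨r, hr, rfl, hb, Or.inr ⟨hd, fun c hc' hrc =>
        (hc c hc' hrc).imp fun q => And.imp_right fun h s hs hsq => (h s hs hsq).symm⟩⟩

end Beta

section Unfounded

variable {A : Type*} (D : DTheory A)

lemma NDLUnfounded_UN (I : Interp (Lit A)) : NDLUnfounded D I (UN D I) := by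
  rintro p ⟨S, hS, hpS⟩
  have hgrow : ∀ r : DRule A, (r.body ∩ (I.2 ∪ S)).Nonempty →
      (r.body ∩ (I.2 ∪ UN D I)).Nonempty :=
    fun r => Set.Nonempty.mono (Set.inter_subset_inter_right _
      (Set.union_subset_union_right _ (Set.subset_sUnion_of_mem hS)))
  refine ⟨fun r hr hrp => hgrow r ((hS p hpS).1 r hr hrp), fun r hr hrp => ?_⟩
  exact ((hS p hpS).2 r hr hrp).imp_left (hgrow r)

lemma NDLUnfounded_compl_betaOp (hfin : ∀ r ∈ D.rules, r.body.Finite) (I : Interp (Lit A)) :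
    NDLUnfounded D I (betaOp D I.1)ᶜ := by
  intro p hp
  -- `β_D(I.1)` is closed under its reduct, so a reduct rule for `p ∉ β_D(I.1)` has a body
  -- literal outside `β_D(I.1)`
  have hbody : ∀ r ∈ betaReduct D I.1, r.head = p →
      (r.body ∩ (I.2 ∪ (betaOp D I.1)ᶜ)).Nonempty := by
    intro r hr hrp
    by_contra hempty
    refine hp (hrp ▸ (TRstep_ClR fun r hr => hfin r (betaReduct_subset_rules D _ hr)).le
      ⟨r, hr, rfl, fun x hx => ?_⟩)
    by_contra hx'
    exact hempty ⟨x, hx, Or.inr hx'⟩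
  refine ⟨fun r hr hrp => hbody r (Or.inl hr) hrp, fun r hr hrp => ?_⟩
  by_cases hdef : ∃ c ∈ D.conflicts, p ∈ c ∧
      ∀ q ∈ c \ {p}, ∃ s ∈ D.rules, s.head = q ∧ s.body ⊆ I.1 ∧ ¬ D.prec s r
  · exact Or.inr hdef
  · push Not at hdef
    subst hrp
    refine Or.inl (hbody r (Or.inr ⟨hr, fun c hc hrc => ?_⟩) rfl)
    obtain ⟨q, hq, hall⟩ := hdef c hc hrc
    exact ⟨q, hq, fun s hs hsq => or_iff_not_imp_left.2 fun hb => hall s hs hsq (not_not.1 hb)⟩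

lemma compl_betaOp_subset_UN (hfin : ∀ r ∈ D.rules, r.body.Finite) (I : Interp (Lit A)) :
    (betaOp D I.1)ᶜ ⊆ UN D I :=
  Set.subset_sUnion_of_mem (NDLUnfounded_compl_betaOp D hfin I)

lemma disjoint_UN_betaOp {I : Interp (Lit A)} (h : Disjoint I.2 (betaOp D I.1)) :
    Disjoint (UN D I) (betaOp D I.1) := by
  refine Set.disjoint_iUnion_right.2 fun n => ?_
  induction n with
  | zero => exact Set.disjoint_empty _
  | succ n ih =>
    refine Set.disjoint_left.2 ?_
    rintro p hpU ⟨r, hr, rfl, hb⟩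
    have hclear : ¬ (r.body ∩ (I.2 ∪ UN D I)).Nonempty := by
      rintro ⟨x, hx, hxF | hxU⟩
      · exact Set.disjoint_left.1 h hxF (TRiter_subset_ClR _ n (hb hx))
      · exact Set.disjoint_left.1 ih hxU (hb hx)
    have hU := NDLUnfounded_UN D I _ hpU
    rcases hr with hr | ⟨hr, hc⟩
    · exact hclear (hU.1 r hr rfl)
    · obtain ⟨c, hc', hrc, hdef⟩ := (hU.2 r hr rfl).resolve_left hclear
      obtain ⟨q, hq, hall⟩ := hc c hc' hrc
      obtain ⟨s, hs, hsq, hsb, hsr⟩ := hdef q hq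
      exact (hall s hs hsq).elim (· hsb) hsr

end Unfounded

section Fixpoint

variable {A : Type*} {D : DTheory A}

lemma compl_betaOp_subset_of_WN_eq (hfin : ∀ r ∈ D.rules, r.body.Finite) {I : Interp (Lit A)}
    (hI : WN D I = I) : (betaOp D I.1)ᶜ ⊆ I.2 :=
  (compl_betaOp_subset_UN D hfin I).trans (congrArg Prod.snd hI).le

lemma betaOp_betaOp_subset_of_WN_eq (hfin : ∀ r ∈ D.rules, r.body.Finite) {I : Interp (Lit A)}
    (hI : WN D I = I) {S : Set (Lit A)} (hS : S ⊆ I.1) : betaOp D (betaOp D S) ⊆ I.1 := by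
  have hreduct : I.2ᶜ ⊆ betaOp D S :=
    (Set.compl_subset_comm.1 (compl_betaOp_subset_of_WN_eq hfin hI)).trans
      (betaOp_antitone D hS)
  have hclosed : TRstep (betaReduct D I.2ᶜ) I.1 ⊆ I.1 :=
    (TD_eq_TRstep_betaReduct D I).symm.trans_le (congrArg Prod.fst hI).le
  exact (ClR_mono (betaReduct_antitone D hreduct)).trans (ClR_subset_of_TRstep_subset hclosed)

lemma Xseq_subset_of_WN_eq (hfin : ∀ r ∈ D.rules, r.body.Finite) {I : Interp (Lit A)}
    (hI : WN D I = I) (o : Ordinal) : Xseq D o ⊆ I.1 :=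
  iterW_le (fun _ hS => betaOp_betaOp_subset_of_WN_eq hfin hI hS) o

lemma WN_eq_of_betaOp_betaOp_eq (hfin : ∀ r ∈ D.rules, r.body.Finite) {X : Set (Lit A)}
    (hX : betaOp D (betaOp D X) = X) :
    WN D (X, (betaOp D X)ᶜ) = (X, (betaOp D X)ᶜ) := by
  refine Prod.ext ?_ ?_
  · change TD D _ = X
    rw [TD_eq_TRstep_betaReduct, compl_compl]
    calc TRstep (betaReduct D (betaOp D X)) X
        = TRstep (betaReduct D (betaOp D X)) (betaOp D (betaOp D X)) := by rw [hX]
      _ = X := (TRstep_ClR fun r hr => hfin r (betaReduct_subset_rules D _ hr)).trans hX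
  · change UN D (X, (betaOp D X)ᶜ) = (betaOp D X)ᶜ
    have hdisj : Disjoint (UN D (X, (betaOp D X)ᶜ)) (betaOp D X) :=
      disjoint_UN_betaOp D (I := (X, (betaOp D X)ᶜ)) disjoint_compl_left
    exact subset_antisymm (Set.subset_compl_iff_disjoint_right.2 hdisj)
      (compl_betaOp_subset_UN D hfin (X, (betaOp D X)ᶜ))

end Fixpoint

/-- Let `D` be a defeasible theory, `⟨T_WF, F_WF⟩` its well-founded model under NDL, and
`λ` the closure ordinal of the sequence `X_D↑0, X_D↑1, …` (the least `λ` with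
`X_D↑λ = X_D↑(λ+1)`). Then `⟨T_WF, F_WF⟩ = ⟨X_D↑λ, Lit(D) − β_D(X_D↑λ)⟩`. -/
theorem ndl_wfm_eq_beta_fixpoint {A : Type*} (D : DTheory A) (hwf : D.WellFormed)
    (I : Interp (Lit A)) (hI : IsWFModel (WN D) I)
    (lam : Ordinal) (hlam : IsLeast {o : Ordinal | Xseq D o = Xseq D (o + 1)} lam) :
    I = (Xseq D lam, Set.univ \ betaOp D (Xseq D lam)) := by
  obtain ⟨hfix, hleast⟩ := hI
  have hfin : ∀ r ∈ D.rules, r.body.Finite := hwf.2.2.1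
  have hstable : betaOp D (betaOp D (Xseq D lam)) = Xseq D lam :=
    ((show Xseq D lam = Xseq D (lam + 1) from hlam.1).trans (iterW_add_one _ lam)).symm
  have hXI : Xseq D lam ⊆ I.1 := Xseq_subset_of_WN_eq hfin hfix lam
  obtain ⟨hIX, hIF⟩ := hleast _ (WN_eq_of_betaOp_betaOp_eq hfin hstable)
  rw [← Set.compl_eq_univ_sdiff]
  refine Prod.ext (hIX.antisymm hXI) (hIF.antisymm ?_)
  exact (Set.compl_subset_compl.2 (betaOp_antitone D hXI)).trans
    (compl_betaOp_subset_of_WN_eq hfin hfix)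

end DLWFS
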